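/- arXiv:1108.1781 — 4 statements merged into one kernel-verified Lean document; each statement's English description precedes it below -/
import Mathlib

section
/- (Freedman's inequality for supermartingales.) Let (S_0, S_1, …) be a supermartingale with respect to a filtration (ℱ_i)_{i≥0} on a probability space, and suppose there is a constant B > 0 such that S_{i+1} − S_i ≤ B almost surely for all i. For t ≥ 0 let V_t = Σ_{i=0}^{t−1} E[(S_{i+1} − S_i)^2 | ℱ_i]. Then for any s, v > 0, the probability that there exists some t ≥ 0 with S_t ≥ S_0 + s and V_t ≤ v is at most exp( − s^2 / (2(v + B s)) ). -/
/-!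
For `l ≥ 0` and `ψ = (e^{lB} - 1 - lB) / B²`, Bennett's bound `e^{ld} ≤ 1 + ld + ψ d²` for
`d ≤ B`, together with `E[S_{t+1} - S_t | ℱ_t] ≤ 0`, gives
`E[e^{l (S_{t+1} - S_t)} | ℱ_t] ≤ e^{ψ (V_{t+1} - V_t)}`. Hence `exp (l (S_t - S_0) - ψ V_t)` is a
nonnegative supermartingale started at `1`, and on the event in question it reaches
`exp (l s - ψ v)` at some time. Ville's maximal inequality bounds the probability of this by
`exp (ψ v - l s)`; the choice `l = s / (v + B s)` and the estimate `e^c - 1 - c ≤ c² / (2 (1 - c))`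
turn the exponent into `s² / (2 (v + B s))`.
-/

open scoped Nat

namespace Real

lemma exp_sub_one_sub_eq_tsum (x : ℝ) :
    exp x - 1 - x = ∑' n : ℕ, x ^ (n + 2) / (n + 2)! := by
  have hs := summable_pow_div_factorial x
  have hexp : exp x = ∑' n : ℕ, x ^ n / n ! := by
    rw [exp_eq_exp_ℝ, NormedSpace.exp_eq_tsum_div]
  rw [hexp, hs.tsum_eq_zero_add, ((summable_nat_add_iff 1).2 hs).tsum_eq_zero_add]
  simp

lemma summable_pow_add_two_div_factorial (x : ℝ) :
    Summable fun n : ℕ => x ^ (n + 2) / (n + 2)! :=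
  (summable_nat_add_iff 2).2 (summable_pow_div_factorial x)

lemma exp_le_quadratic_of_nonpos {x : ℝ} (hx : x ≤ 0) : exp x ≤ 1 + x + x ^ 2 / 2 := by
  let g : ℝ → ℝ := fun y => 1 + y + y ^ 2 / 2 - exp y
  have hg : ∀ y, HasDerivAt g (1 + y - exp y) y := fun y =>
    ((((hasDerivAt_id' y).const_add 1).add ((hasDerivAt_pow 2 y).div_const 2)).sub
      (hasDerivAt_exp y)).congr_deriv (by ring)
  have : g 0 ≤ g x := antitone_of_deriv_nonpos (fun y => (hg y).differentiableAt)
    (fun y => by rw [(hg y).deriv]; linarith [add_one_le_exp y]) hx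
  simpa [g] using this

/-- `(exp u - 1 - u) / u ^ 2` is nondecreasing, in a form free of division. -/
lemma sq_mul_exp_sub_one_sub_le {c u : ℝ} (hc : 0 < c) (hu : u ≤ c) :
    c ^ 2 * (exp u - 1 - u) ≤ u ^ 2 * (exp c - 1 - c) := by
  rcases le_or_gt u 0 with hu0 | hu0
  · have h1 := exp_le_quadratic_of_nonpos hu0
    have h2 := quadratic_le_exp_of_nonneg hc.le
    nlinarith [sq_nonneg u, sq_nonneg c, sq_nonneg (u * c)]
  · rw [exp_sub_one_sub_eq_tsum u, exp_sub_one_sub_eq_tsum c, ← tsum_mul_left, ← tsum_mul_left]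
    refine Summable.tsum_le_tsum (fun n => ?_) ((summable_pow_add_two_div_factorial u).mul_left _)
      ((summable_pow_add_two_div_factorial c).mul_left _)
    rw [mul_div_assoc', mul_div_assoc']
    gcongr ?_ / _
    calc c ^ 2 * u ^ (n + 2) = (c ^ 2 * u ^ 2) * u ^ n := by ring
      _ ≤ (c ^ 2 * u ^ 2) * c ^ n := by gcongr
      _ = u ^ 2 * c ^ (n + 2) := by ring

lemma exp_sub_one_sub_le_sq_div {c : ℝ} (hc0 : 0 ≤ c) (hc1 : c < 1) :
    exp c - 1 - c ≤ c ^ 2 / (2 * (1 - c)) := by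
  have hgeom := (summable_geometric_of_lt_one hc0 hc1).mul_left (c ^ 2 / 2)
  calc exp c - 1 - c ≤ ∑' n : ℕ, c ^ 2 / 2 * c ^ n := by
        rw [exp_sub_one_sub_eq_tsum c]
        refine Summable.tsum_le_tsum (fun n => ?_) (summable_pow_add_two_div_factorial c) hgeom
        have h2 : (2 : ℝ) ≤ (n + 2)! := by
          exact_mod_cast (Nat.le_add_left 2 n).trans (Nat.self_le_factorial _)
        calc c ^ (n + 2) / (n + 2)! ≤ c ^ (n + 2) / 2 := by gcongr
          _ = c ^ 2 / 2 * c ^ n := by ring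
    _ = c ^ 2 / (2 * (1 - c)) := by
        rw [tsum_mul_left, tsum_geometric_of_lt_one hc0 hc1]
        field_simp

/-- Bennett's inequality. -/
lemma exp_mul_le_one_add_mul_add_mul_sq {B l d : ℝ} (hB : 0 < B) (hl : 0 < l) (hd : d ≤ B) :
    exp (l * d) ≤ 1 + l * d + (exp (l * B) - 1 - l * B) / B ^ 2 * d ^ 2 := by
  have hkey := sq_mul_exp_sub_one_sub_le (mul_pos hl hB) (mul_le_mul_of_nonneg_left hd hl.le)
  have : exp (l * d) - 1 - l * d ≤ (exp (l * B) - 1 - l * B) / B ^ 2 * d ^ 2 := by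
    rw [div_mul_eq_mul_div, le_div_iff₀ (by positivity)]
    nlinarith [hkey, pow_pos hl 2]
  linarith

end Real

namespace MeasureTheory

variable {Ω : Type*} {m0 : MeasurableSpace Ω} {μ : Measure Ω} {ℱ : Filtration ℕ m0}

lemma integrable_exp_of_ae_le [IsFiniteMeasure μ] {f : Ω → ℝ} (hf : AEStronglyMeasurable f μ)
    {C : ℝ} (hC : ∀ᵐ ω ∂μ, f ω ≤ C) : Integrable (fun ω => Real.exp (f ω)) μ := by
  refine Integrable.mono' (integrable_const (Real.exp C))
    (Real.continuous_exp.comp_aestronglyMeasurable hf) ?_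
  filter_upwards [hC] with ω hω
  rw [Real.norm_eq_abs, abs_of_pos (Real.exp_pos _)]
  exact Real.exp_le_exp.2 hω

lemma ae_sub_le_mul_of_forall_ae_succ_sub_le {S : ℕ → Ω → ℝ} {B : ℝ}
    (hbdd : ∀ i, ∀ᵐ ω ∂μ, S (i + 1) ω - S i ω ≤ B) (t : ℕ) :
    ∀ᵐ ω ∂μ, S t ω - S 0 ω ≤ t * B := by
  filter_upwards [ae_all_iff.2 hbdd] with ω hω
  calc S t ω - S 0 ω = ∑ i ∈ Finset.range t, (S (i + 1) ω - S i ω) :=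
        (Finset.sum_range_sub (fun i => S i ω) t).symm
    _ ≤ ∑ _i ∈ Finset.range t, B := Finset.sum_le_sum fun i _ => hω i
    _ = t * B := by simp

variable {S : ℕ → Ω → ℝ}

/-- The process `V_t` of the statement. -/
noncomputable def sumCondSqIncrement (μ : Measure Ω) (ℱ : Filtration ℕ m0) (S : ℕ → Ω → ℝ)
    (t : ℕ) (ω : Ω) : ℝ :=
  ∑ i ∈ Finset.range t, μ[fun ω' => (S (i + 1) ω' - S i ω') ^ 2|ℱ i] ω

lemma stronglyAdapted_sumCondSqIncrement : StronglyAdapted ℱ (sumCondSqIncrement μ ℱ S) :=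
  fun _ => Finset.stronglyMeasurable_fun_sum _ fun _ hi =>
    stronglyMeasurable_condExp.mono (ℱ.mono (Finset.mem_range.1 hi).le)

lemma sumCondSqIncrement_nonneg (t : ℕ) : 0 ≤ᵐ[μ] sumCondSqIncrement μ ℱ S t := by
  have h := ae_all_iff.2 fun i => condExp_nonneg (μ := μ) (m := ℱ i)
    (f := fun ω => (S (i + 1) ω - S i ω) ^ 2) (ae_of_all μ fun ω => sq_nonneg _)
  filter_upwards [h] with ω hω
  exact Finset.sum_nonneg fun i _ => hω i

lemma sumCondSqIncrement_succ (t : ℕ) (ω : Ω) :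
    sumCondSqIncrement μ ℱ S (t + 1) ω =
      sumCondSqIncrement μ ℱ S t ω + μ[fun ω' => (S (t + 1) ω' - S t ω') ^ 2|ℱ t] ω :=
  Finset.sum_range_succ _ _

lemma Supermartingale.condExp_sub_nonpos {f : ℕ → Ω → ℝ} (hf : Supermartingale f ℱ μ)
    {i j : ℕ} (hij : i ≤ j) : μ[f j - f i|ℱ i] ≤ᵐ[μ] 0 := by
  have h := hf.neg.condExp_sub_nonneg hij
  simp only [Pi.neg_apply, neg_sub_neg] at h
  have hneg : μ[f j - f i|ℱ i] =ᵐ[μ] -μ[f i - f j|ℱ i] := by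
    rw [← neg_sub]; exact condExp_neg _ _
  filter_upwards [h, hneg] with ω hω hωneg
  rw [hωneg, Pi.neg_apply, Pi.zero_apply, neg_nonpos]
  exact hω

lemma condExp_exp_mul_le [IsFiniteMeasure μ] {m : MeasurableSpace Ω} (hm : m ≤ m0)
    {X : Ω → ℝ} (hX : Integrable X μ) (hX2 : Integrable (fun ω => X ω ^ 2) μ) {B : ℝ}
    (hXB : ∀ᵐ ω ∂μ, X ω ≤ B) (hXm : μ[X|m] ≤ᵐ[μ] 0) {l ψ : ℝ} (hl : 0 ≤ l)
    (hexp : ∀ d ≤ B, Real.exp (l * d) ≤ 1 + l * d + ψ * d ^ 2) :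
    μ[fun ω => Real.exp (l * X ω)|m] ≤ᵐ[μ] fun ω => Real.exp (ψ * μ[fun ω => X ω ^ 2|m] ω) := by
  have hexp_int : Integrable (fun ω => Real.exp (l * X ω)) μ :=
    integrable_exp_of_ae_le (hX.aestronglyMeasurable.const_mul l)
      (by filter_upwards [hXB] with ω hω using mul_le_mul_of_nonneg_left hω hl)
  have hquad_int : Integrable (fun ω => 1 + l * X ω + ψ * X ω ^ 2) μ :=
    ((integrable_const 1).add (hX.const_mul l)).add (hX2.const_mul ψ)
  have hle : μ[fun ω => Real.exp (l * X ω)|m] ≤ᵐ[μ] μ[fun ω => 1 + l * X ω + ψ * X ω ^ 2|m] :=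
    condExp_mono hexp_int hquad_int (by filter_upwards [hXB] with ω hω using hexp _ hω)
  have hlin : μ[fun ω => 1 + l * X ω + ψ * X ω ^ 2|m]
      =ᵐ[μ] fun ω => 1 + l * μ[X|m] ω + ψ * μ[fun ω => X ω ^ 2|m] ω := by
    have h1 := condExp_add ((integrable_const 1).add (hX.smul l)) (hX2.smul ψ) m
    have h2 := condExp_add (integrable_const (1 : ℝ)) (hX.smul l) m
    have h3 := condExp_smul (μ := μ) l X m
    have h4 := condExp_smul (μ := μ) ψ (fun ω => X ω ^ 2) m
    filter_upwards [h1, h2, h3, h4] with ω h1 h2 h3 h4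
    change μ[((fun _ => 1) + l • X) + ψ • fun ω => X ω ^ 2|m] ω = _
    rw [h1, Pi.add_apply, h2, Pi.add_apply, h3, h4, condExp_const hm]
    rfl
  filter_upwards [hle, hlin, hXm] with ω hle hlin hXm
  rw [hlin] at hle
  have := Real.add_one_le_exp (ψ * μ[fun ω => X ω ^ 2|m] ω)
  nlinarith [mul_nonpos_of_nonneg_of_nonpos hl hXm]

lemma Supermartingale.exp_mul_sub_mul_sumCondSqIncrement [IsFiniteMeasure μ]
    (hS : Supermartingale S ℱ μ) {B : ℝ} (hbdd : ∀ i, ∀ᵐ ω ∂μ, S (i + 1) ω - S i ω ≤ B)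
    (hint : ∀ i, Integrable (fun ω => (S (i + 1) ω - S i ω) ^ 2) μ) {l ψ : ℝ} (hl : 0 ≤ l)
    (hψ : 0 ≤ ψ) (hexp : ∀ d ≤ B, Real.exp (l * d) ≤ 1 + l * d + ψ * d ^ 2) :
    Supermartingale
      (fun t ω => Real.exp (l * (S t ω - S 0 ω) - ψ * sumCondSqIncrement μ ℱ S t ω)) ℱ μ := by
  set V := sumCondSqIncrement μ ℱ S
  set M : ℕ → Ω → ℝ := fun t ω => Real.exp (l * (S t ω - S 0 ω) - ψ * V t ω)
  have hexponent : StronglyAdapted ℱ fun t ω => l * (S t ω - S 0 ω) - ψ * V t ω := fun t =>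
    (((hS.stronglyAdapted t).sub ((hS.stronglyAdapted 0).mono (ℱ.mono t.zero_le))).const_mul
      l).sub ((stronglyAdapted_sumCondSqIncrement t).const_mul ψ)
  have hadapted : StronglyAdapted ℱ M := fun t =>
    Real.continuous_exp.comp_stronglyMeasurable (hexponent t)
  have hM_int : ∀ t, Integrable (M t) μ := fun t =>
    integrable_exp_of_ae_le ((hexponent t).mono (ℱ.le t)).aestronglyMeasurable (C := l * (t * B))
      (by
        filter_upwards [ae_sub_le_mul_of_forall_ae_succ_sub_le hbdd t,
          sumCondSqIncrement_nonneg t] with ω hS hV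
        nlinarith [mul_le_mul_of_nonneg_left hS hl, mul_nonneg hψ hV])
  refine supermartingale_nat hadapted hM_int fun t => ?_
  let F : Ω → ℝ := fun ω =>
    M t ω * Real.exp (-(ψ * μ[fun ω' => (S (t + 1) ω' - S t ω') ^ 2|ℱ t] ω))
  let G : Ω → ℝ := fun ω => Real.exp (l * (S (t + 1) ω - S t ω))
  have hMFG : M (t + 1) = F * G := by
    funext ω
    simp only [M, F, G, Pi.mul_apply, ← Real.exp_add, V, sumCondSqIncrement_succ]
    ring_nf
  have hF : StronglyMeasurable[ℱ t] F := (hadapted t).mul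
    (Real.continuous_exp.comp_stronglyMeasurable (stronglyMeasurable_condExp.const_mul ψ).neg)
  have hΔ : Integrable (S (t + 1) - S t) μ := (hS.integrable _).sub (hS.integrable _)
  have hG : Integrable G μ :=
    integrable_exp_of_ae_le (hΔ.aestronglyMeasurable.const_mul l)
      (by filter_upwards [hbdd t] with ω hω using mul_le_mul_of_nonneg_left hω hl)
  have hpull := condExp_mul_of_stronglyMeasurable_left hF (hMFG ▸ hM_int (t + 1)) hG
  have hbennett := condExp_exp_mul_le (ℱ.le t) hΔ (hint t) (hbdd t)
    (hS.condExp_sub_nonpos t.le_succ) hl hexp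
  rw [hMFG]
  filter_upwards [hpull, hbennett] with ω hpull hbennett
  rw [hpull, Pi.mul_apply]
  calc F ω * μ[G|ℱ t] ω
      ≤ F ω * Real.exp (ψ * μ[fun ω' => (S (t + 1) ω' - S t ω') ^ 2|ℱ t] ω) :=
        mul_le_mul_of_nonneg_left hbennett (by positivity)
    _ = M t ω := by
        simp only [F, mul_assoc, ← Real.exp_add, neg_add_cancel, Real.exp_zero, mul_one]

lemma Supermartingale.integral_stoppedValue_le [IsFiniteMeasure μ] {M : ℕ → Ω → ℝ}
    (hM : Supermartingale M ℱ μ) {τ : Ω → WithTop ℕ} (hτ : IsStoppingTime ℱ τ) {N : ℕ}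
    (hτN : ∀ ω, τ ω ≤ N) :
    ∫ ω, stoppedValue M τ ω ∂μ ≤ ∫ ω, M 0 ω ∂μ := by
  have h := hM.neg.expected_stoppedValue_mono (isStoppingTime_const ℱ 0) hτ
    (fun _ => zero_le) hτN
  simp only [stoppedValue_const] at h
  have hneg : stoppedValue (-M) τ = -stoppedValue M τ := rfl
  rw [hneg, Pi.neg_apply] at h
  simpa [integral_neg] using h

lemma Supermartingale.measure_exists_le_ge_le [IsFiniteMeasure μ] {M : ℕ → Ω → ℝ}
    (hM : Supermartingale M ℱ μ) (hM0 : 0 ≤ M) {c : ℝ} (hc : 0 < c) (n : ℕ) :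
    μ {ω | ∃ k ≤ n, c ≤ M k ω} ≤ ENNReal.ofReal ((∫ ω, M 0 ω ∂μ) / c) := by
  let τ : Ω → WithTop ℕ := fun ω => (hittingBtwn M (Set.Ici c) 0 n ω : ℕ)
  have hτ : IsStoppingTime ℱ τ :=
    hM.stronglyAdapted.adapted.isStoppingTime_hittingBtwn measurableSet_Ici
  have hτn : ∀ ω, τ ω ≤ n := fun ω => WithTop.coe_le_coe.2 (hittingBtwn_le ω)
  have hsub : {ω | ∃ k ≤ n, c ≤ M k ω} ⊆ {ω | c ≤ stoppedValue M τ ω} :=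
    fun ω ⟨k, hk, hck⟩ => stoppedValue_hittingBtwn_mem ⟨k, ⟨zero_le, hk⟩, hck⟩
  have hmarkov := mul_meas_ge_le_integral_of_nonneg (ae_of_all _ fun ω => hM0 _ ω)
    (integrable_stoppedValue ℕ hτ hM.integrable hτn) c
  rw [ENNReal.le_ofReal_iff_toReal_le (measure_ne_top μ _)
    (div_nonneg (integral_nonneg (hM0 0)) hc.le), le_div_iff₀ hc]
  calc μ.real {ω | ∃ k ≤ n, c ≤ M k ω} * c ≤ c * μ.real {ω | c ≤ stoppedValue M τ ω} := by
        rw [mul_comm]; exact mul_le_mul_of_nonneg_left (measureReal_mono hsub) hc.le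
    _ ≤ ∫ ω, M 0 ω ∂μ := hmarkov.trans (hM.integral_stoppedValue_le hτ hτn)

/-- Ville's maximal inequality for nonnegative supermartingales. -/
lemma Supermartingale.measure_exists_ge_le [IsFiniteMeasure μ] {M : ℕ → Ω → ℝ}
    (hM : Supermartingale M ℱ μ) (hM0 : 0 ≤ M) {c : ℝ} (hc : 0 < c) :
    μ {ω | ∃ t, c ≤ M t ω} ≤ ENNReal.ofReal ((∫ ω, M 0 ω ∂μ) / c) := by
  have hunion : {ω | ∃ t, c ≤ M t ω} = ⋃ n, {ω | ∃ k ≤ n, c ≤ M k ω} := by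
    ext ω
    simp only [Set.mem_ofPred_eq, Set.mem_iUnion]
    exact ⟨fun ⟨t, ht⟩ => ⟨t, t, le_rfl, ht⟩, fun ⟨_, k, _, hk⟩ => ⟨k, hk⟩⟩
  have hmono : Monotone fun n => {ω | ∃ k ≤ n, c ≤ M k ω} :=
    fun _ _ hnm _ ⟨k, hk, hck⟩ => ⟨k, hk.trans hnm, hck⟩
  rw [hunion, hmono.measure_iUnion]
  exact iSup_le (hM.measure_exists_le_ge_le hM0 hc)

end MeasureTheory

/-- At `l = s / (v + B s)` the Chernoff exponent `l s - ψ v` of Freedman's bound is at least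
`s² / (2 (v + B s))`. -/
lemma Real.sq_div_le_mul_sub_mul {B s v : ℝ} (hB : 0 < B) (hs : 0 < s) (hv : 0 < v) :
    s ^ 2 / (2 * (v + B * s)) ≤
      s / (v + B * s) * s - (exp (s / (v + B * s) * B) - 1 - s / (v + B * s) * B) / B ^ 2 * v := by
  have hD : 0 < v + B * s := by positivity
  have hc1 : 1 - s / (v + B * s) * B = v / (v + B * s) := by
    field_simp
    ring
  have hc : s / (v + B * s) * B < 1 := by
    have : 0 < v / (v + B * s) := by positivity
    linarith
  have hψ : (exp (s / (v + B * s) * B) - 1 - s / (v + B * s) * B) / B ^ 2 * v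
      ≤ s ^ 2 / (2 * (v + B * s)) :=
    calc _ ≤ (s / (v + B * s) * B) ^ 2 / (2 * (1 - s / (v + B * s) * B)) / B ^ 2 * v := by
          gcongr
          exact exp_sub_one_sub_le_sq_div (by positivity) hc
      _ = s ^ 2 / (2 * (v + B * s)) := by
          rw [hc1]
          field_simp
  have : s / (v + B * s) * s = 2 * (s ^ 2 / (2 * (v + B * s))) := by
    field_simp
  linarith

open MeasureTheory

/-- Freedman's inequality for supermartingales: if `(S_i)` is a supermartingale
with respect to a filtration `(ℱ_i)` whose increments are bounded above by `B > 0` almost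
surely, and `V_t = Σ_{i<t} E[(S_{i+1} − S_i)² | ℱ_i]`, then for any `s, v > 0` the probability
that `S_t ≥ S_0 + s` and `V_t ≤ v` for some `t` is at most `exp(−s²/(2(v + Bs)))`. -/
theorem freedman_inequality
    {Ω : Type*} {m0 : MeasurableSpace Ω} {μ : Measure Ω} [IsProbabilityMeasure μ]
    (ℱ : Filtration ℕ m0) (S : ℕ → Ω → ℝ)
    (hS : Supermartingale S ℱ μ)
    (B : ℝ) (hB : 0 < B)
    (hbdd : ∀ i : ℕ, ∀ᵐ ω ∂μ, S (i + 1) ω - S i ω ≤ B)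
    (hint : ∀ i : ℕ, Integrable (fun ω => (S (i + 1) ω - S i ω) ^ 2) μ)
    (s v : ℝ) (hs : 0 < s) (hv : 0 < v) :
    μ {ω | ∃ t : ℕ, S 0 ω + s ≤ S t ω ∧
        (∑ i ∈ Finset.range t,
          (μ[fun ω' => (S (i + 1) ω' - S i ω') ^ 2|ℱ i]) ω) ≤ v}
      ≤ ENNReal.ofReal (Real.exp (-(s ^ 2) / (2 * (v + B * s)))) := by
  set l := s / (v + B * s)
  set ψ := (Real.exp (l * B) - 1 - l * B) / B ^ 2
  have hl : 0 < l := by positivity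
  have hψ : 0 ≤ ψ := div_nonneg (by linarith [Real.add_one_le_exp (l * B)]) (by positivity)
  have hM := hS.exp_mul_sub_mul_sumCondSqIncrement hbdd hint hl.le hψ
    fun d hd => Real.exp_mul_le_one_add_mul_add_mul_sq hB hl hd
  have hsub : {ω | ∃ t : ℕ, S 0 ω + s ≤ S t ω ∧ sumCondSqIncrement μ ℱ S t ω ≤ v} ⊆
      {ω | ∃ t, Real.exp (l * s - ψ * v) ≤
        Real.exp (l * (S t ω - S 0 ω) - ψ * sumCondSqIncrement μ ℱ S t ω)} :=
    fun ω ⟨t, hSt, hVt⟩ => ⟨t, Real.exp_le_exp.2 (by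
      nlinarith [mul_le_mul_of_nonneg_left hVt hψ, mul_le_mul_of_nonneg_left hSt hl.le])⟩
  calc _ ≤ _ := measure_mono hsub
    _ ≤ _ := hM.measure_exists_ge_le (fun _ _ => (Real.exp_pos _).le) (Real.exp_pos _)
    _ = ENNReal.ofReal (Real.exp (-(l * s - ψ * v))) := by
        rw [Real.exp_neg]; simp [sumCondSqIncrement]
    _ ≤ _ := ENNReal.ofReal_le_ofReal (Real.exp_le_exp.2 (by
        linarith [Real.sq_div_le_mul_sub_mul hB hs hv, neg_div (2 * (v + B * s)) (s ^ 2)]))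
end

section
/- Let G be a finite simple graph and let u ≠ v be vertices of G. Then the sum, over all triangles T of G, of the quantity Y_{u,v}(G) − Y_{u,v}(G − T) equals Σ_{x ∈ N_{u,v}} ( Y_{u,x}(G) + Y_{v,x}(G) − 1_{uv ∈ E(G)} ), where 1_{uv ∈ E(G)} is 1 if uv is an edge of G and 0 otherwise. -/
open Finset
open scoped Classical

variable {V : Type*} [Fintype V] [DecidableEq V]

/-- The neighborhood of `u` in `G`, as a finset. -/
noncomputable def nbr (G : SimpleGraph V) (u : V) : Finset V :=
  Finset.univ.filter fun x => G.Adj u x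

/-- The co-degree `Y_{u,v}` of `u` and `v`. -/
noncomputable def codeg (G : SimpleGraph V) (u v : V) : ℕ :=
  (nbr G u ∩ nbr G v).card

/-- The triple co-degree `Y_{u,v,w}`. -/
noncomputable def codeg3 (G : SimpleGraph V) (u v w : V) : ℕ :=
  (nbr G u ∩ nbr G v ∩ nbr G w).card

/-- The number of triangles `Q(G)`. -/
noncomputable def triCount (G : SimpleGraph V) : ℕ :=
  (G.cliqueFinset 3).card

/-- The graph `G − T` obtained by deleting the edges of a triangle `t = {a,b,c}`. -/
noncomputable def removeTri (G : SimpleGraph V) (t : Finset V) : SimpleGraph V :=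
  G.deleteEdges ↑(t.sym2)

/-- `T_u(G)`: the number of edges of `G` with both endpoints in `N_u`. -/
noncomputable def tEdges (G : SimpleGraph V) (u : V) : ℕ :=
  (G.edgeFinset.filter fun e => ∀ x ∈ e, x ∈ nbr G u).card

/-- `R_{u,v}`: the number of ordered pairs `(x,y)` with `xy ∈ E(G)`, `x ∈ N_{u,v}`,
`y ∈ N_u`, `y ≠ v`. -/
noncomputable def Rpairs (G : SimpleGraph V) (u v : V) : ℕ :=
  (((nbr G u ∩ nbr G v) ×ˢ ((nbr G u).erase v)).filter fun p => G.Adj p.1 p.2).card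

/-- The co-degree as a function on unordered pairs. -/
noncomputable def codegE (G : SimpleGraph V) : Sym2 V → ℕ :=
  Sym2.lift ⟨fun x y => codeg G x y, fun x y => by
    simp only [codeg, Finset.inter_comm]⟩

lemma mem_nbr {G : SimpleGraph V} {u x : V} : x ∈ nbr G u ↔ G.Adj u x := by
  simp [nbr]

lemma count_tri (G : SimpleGraph V) (a b : V) (hab : G.Adj a b) :
    ((G.cliqueFinset 3).filter fun t => a ∈ t ∧ b ∈ t).card = codeg G a b := by
  symm
  apply Finset.card_bij (fun w _ => ({a, b, w} : Finset V))
  · intro w hw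
    simp only [Finset.mem_inter, mem_nbr] at hw
    simp only [Finset.mem_filter, SimpleGraph.mem_cliqueFinset_iff,
      SimpleGraph.is3Clique_triple_iff]
    refine ⟨⟨hab, hw.1, hw.2⟩, ?_, ?_⟩ <;> simp
  · intro w1 h1 w2 h2 heq
    simp only [Finset.mem_inter, mem_nbr] at h1 h2
    have : w1 ∈ ({a, b, w2} : Finset V) := heq ▸ (by simp)
    simp only [Finset.mem_insert, Finset.mem_singleton] at this
    rcases this with h | h | h
    · exact absurd h h1.1.ne'
    · exact absurd h h1.2.ne'
    · exact h
  · intro t ht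
    simp only [Finset.mem_filter, SimpleGraph.mem_cliqueFinset_iff] at ht
    obtain ⟨⟨hcl, hcard⟩, ha, hb⟩ := ht
    have hab' : a ≠ b := hab.ne
    have h1 : ((t.erase a).erase b).card = 1 := by
      rw [Finset.card_erase_of_mem (Finset.mem_erase.mpr ⟨hab'.symm, hb⟩),
        Finset.card_erase_of_mem ha, hcard]
    obtain ⟨w, hw⟩ := Finset.card_eq_one.mp h1
    have hwmem : w ∈ (t.erase a).erase b := hw ▸ Finset.mem_singleton_self w
    obtain ⟨hwb, hwa, hwt⟩ : w ≠ b ∧ w ≠ a ∧ w ∈ t := by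
      simp only [Finset.mem_erase] at hwmem; tauto
    refine ⟨w, ?_, ?_⟩
    · simp only [Finset.mem_inter, mem_nbr]
      exact ⟨hcl ha hwt (Ne.symm hwa), hcl hb hwt (Ne.symm hwb)⟩
    · apply Finset.eq_of_subset_of_card_le
      · intro y hy
        simp only [Finset.mem_insert, Finset.mem_singleton] at hy
        rcases hy with rfl | rfl | rfl <;> assumption
      · rw [hcard]
        rw [Finset.card_insert_of_notMem (by simp [hab', hwa.symm]),
          Finset.card_insert_of_notMem (by simp [hwb.symm]), Finset.card_singleton]

lemma count_tri_both (G : SimpleGraph V) (u v x : V) (huv : u ≠ v)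
    (hux : G.Adj u x) (hvx : G.Adj v x) :
    ((G.cliqueFinset 3).filter fun t => (u ∈ t ∧ x ∈ t) ∧ (v ∈ t ∧ x ∈ t)).card
      = if G.Adj u v then 1 else 0 := by
  split_ifs with h
  · rw [Finset.card_eq_one]
    refine ⟨{u, v, x}, ?_⟩
    ext t
    simp only [Finset.mem_filter, SimpleGraph.mem_cliqueFinset_iff, Finset.mem_singleton]
    constructor
    · rintro ⟨⟨hcl, hcard⟩, ⟨hu, hx⟩, hv, -⟩
      symm
      apply Finset.eq_of_subset_of_card_le
      · intro y hy
        simp only [Finset.mem_insert, Finset.mem_singleton] at hy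
        rcases hy with rfl | rfl | rfl <;> assumption
      · rw [hcard,
          Finset.card_insert_of_notMem (by simp [huv, hux.ne]),
          Finset.card_insert_of_notMem (by simp [hvx.ne]), Finset.card_singleton]
    · rintro rfl
      refine ⟨SimpleGraph.is3Clique_triple_iff.mpr ⟨h, hux, hvx⟩, ?_⟩
      simp
  · rw [Finset.card_eq_zero]
    ext t
    simp only [Finset.mem_filter, SimpleGraph.mem_cliqueFinset_iff, Finset.notMem_empty,
      iff_false]
    rintro ⟨⟨hcl, -⟩, ⟨hu, -⟩, hv, -⟩
    exact h (hcl hu hv huv)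

lemma drop_eq (G : SimpleGraph V) (u v : V) (t : Finset V) :
    (codeg G u v : ℤ) - codeg (removeTri G t) u v
      = ((nbr G u ∩ nbr G v).filter fun x => (u ∈ t ∧ x ∈ t) ∨ (v ∈ t ∧ x ∈ t)).card := by
  have hset : nbr (removeTri G t) u ∩ nbr (removeTri G t) v
      = (nbr G u ∩ nbr G v).filter fun x => ¬((u ∈ t ∧ x ∈ t) ∨ (v ∈ t ∧ x ∈ t)) := by
    ext x
    simp only [Finset.mem_inter, mem_nbr, Finset.mem_filter, removeTri,
      SimpleGraph.deleteEdges_adj, Finset.mem_coe, Finset.mem_sym2_iff, Sym2.mem_iff,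
      forall_eq_or_imp, forall_eq, not_or, not_and_or]
    tauto
  have := Finset.card_filter_add_card_filter_not
    (s := nbr G u ∩ nbr G v) (p := fun x => (u ∈ t ∧ x ∈ t) ∨ (v ∈ t ∧ x ∈ t))
  rw [codeg, codeg, hset]
  push_cast [← this]
  ring


/-- for `u ≠ v`, the total decrease of the co-degree `Y_{u,v}` over all
single-triangle removals equals `Σ_{x ∈ N_{u,v}} (Y_{u,x} + Y_{v,x} − 1_{uv ∈ E})`. -/
theorem codeg_one_step_change (G : SimpleGraph V) (u v : V) (huv : u ≠ v) :
    (∑ t ∈ G.cliqueFinset 3, ((codeg G u v : ℤ) - codeg (removeTri G t) u v)) =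
      ∑ x ∈ nbr G u ∩ nbr G v,
        ((codeg G u x : ℤ) + codeg G v x - if G.Adj u v then 1 else 0) := by
  calc (∑ t ∈ G.cliqueFinset 3, ((codeg G u v : ℤ) - codeg (removeTri G t) u v))
      = ∑ t ∈ G.cliqueFinset 3, ∑ x ∈ nbr G u ∩ nbr G v,
          (if (u ∈ t ∧ x ∈ t) ∨ (v ∈ t ∧ x ∈ t) then (1 : ℤ) else 0) := by
        refine Finset.sum_congr rfl fun t _ => ?_
        rw [drop_eq, ← Finset.sum_boole]
    _ = ∑ x ∈ nbr G u ∩ nbr G v, ∑ t ∈ G.cliqueFinset 3,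
          (if (u ∈ t ∧ x ∈ t) ∨ (v ∈ t ∧ x ∈ t) then (1 : ℤ) else 0) :=
        Finset.sum_comm
    _ = _ := by
        refine Finset.sum_congr rfl fun x hx => ?_
        simp only [Finset.mem_inter, mem_nbr] at hx
        rw [Finset.sum_boole]
        have key : (((G.cliqueFinset 3).filter fun t => (u ∈ t ∧ x ∈ t) ∨ (v ∈ t ∧ x ∈ t)).card : ℤ)
            = ((G.cliqueFinset 3).filter fun t => u ∈ t ∧ x ∈ t).card
              + ((G.cliqueFinset 3).filter fun t => v ∈ t ∧ x ∈ t).card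
              - ((G.cliqueFinset 3).filter fun t => (u ∈ t ∧ x ∈ t) ∧ (v ∈ t ∧ x ∈ t)).card := by
          rw [Finset.filter_or]
          have := Finset.card_union_add_card_inter
            ((G.cliqueFinset 3).filter fun t => u ∈ t ∧ x ∈ t)
            ((G.cliqueFinset 3).filter fun t => v ∈ t ∧ x ∈ t)
          rw [← Finset.filter_and] at this
          zify at this
          linarith
        rw [key, count_tri G u x hx.1, count_tri G v x hx.2,
          count_tri_both G u v x huv hx.1 hx.2]
        split_ifs <;> norm_num
end

section
/- Let G be a finite simple graph and let u ≠ v be vertices of G. Then Σ_{x ∈ N_{u,v}} ( Y_{u,x} + Y_{v,x} − 1_{uv ∈ E(G)} ) = R_{u,v} + R_{v,u} + Y_{u,v} · 1_{uv ∈ E(G)}, where 1_{uv ∈ E(G)} is 1 if uv is an edge of G and 0 otherwise. -/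
open Finset
open scoped Classical

variable {V : Type*} [Fintype V] [DecidableEq V]

lemma codeg_key (G : SimpleGraph V) (u v : V) :
    ∑ x ∈ nbr G u ∩ nbr G v, codeg G u x
      = Rpairs G u v + codeg G u v * (if G.Adj u v then 1 else 0) := by
  have h1 : ∀ x : V, codeg G u x = ∑ y ∈ nbr G u, (if G.Adj x y then 1 else 0) := by
    intro x
    have : nbr G u ∩ nbr G x = (nbr G u).filter (fun y => G.Adj x y) := by
      ext y; simp [nbr]
    rw [codeg, this, Finset.card_filter]
  have hR : Rpairs G u v
      = ∑ x ∈ nbr G u ∩ nbr G v, ∑ y ∈ (nbr G u).erase v,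
          (if G.Adj x y then 1 else 0) := by
    rw [Rpairs, Finset.card_filter, Finset.sum_product]
  by_cases hadj : G.Adj u v
  · have hv : v ∈ nbr G u := by simp [nbr, hadj]
    simp only [h1, hR, if_pos hadj, mul_one]
    have hsplit : ∀ x ∈ nbr G u ∩ nbr G v,
        (∑ y ∈ nbr G u, (if G.Adj x y then 1 else 0))
          = (∑ y ∈ (nbr G u).erase v, (if G.Adj x y then 1 else 0)) + 1 := by
      intro x hx
      have hxv : G.Adj x v := by
        have : G.Adj v x := by simpa [nbr] using (Finset.mem_inter.mp hx).2
        exact this.symm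
      rw [← Finset.sum_erase_add _ _ hv, if_pos hxv]
    rw [Finset.sum_congr rfl hsplit, Finset.sum_add_distrib]
    have hlast : (∑ _x ∈ nbr G u ∩ nbr G v, 1)
        = ∑ y ∈ nbr G u, if G.Adj v y then 1 else 0 := by
      rw [Finset.sum_const, smul_eq_mul, mul_one, ← Finset.card_filter]
      congr 1
      ext y; simp [nbr]
    rw [hlast]
  · have hv : v ∉ nbr G u := by simp [nbr, hadj]
    simp only [h1, hR, if_neg hadj, mul_zero, add_zero,
      Finset.erase_eq_of_notMem hv]

/-- for `u ≠ v`,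
`Σ_{x ∈ N_{u,v}} (Y_{u,x} + Y_{v,x} − 1_{uv∈E}) = R_{u,v} + R_{v,u} + Y_{u,v}·1_{uv∈E}`. -/
theorem codeg_sum_eq_R (G : SimpleGraph V) (u v : V) (huv : u ≠ v) :
    (∑ x ∈ nbr G u ∩ nbr G v,
        ((codeg G u x : ℤ) + codeg G v x - if G.Adj u v then 1 else 0)) =
      (Rpairs G u v : ℤ) + Rpairs G v u +
        (codeg G u v : ℤ) * (if G.Adj u v then 1 else 0) := by
  have h1 := codeg_key G u v
  have h2 := codeg_key G v u
  rw [Finset.inter_comm] at h2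
  have hcomm : codeg G v u = codeg G u v := by simp [codeg, Finset.inter_comm]
  have hadj : G.Adj v u ↔ G.Adj u v := G.adj_comm v u
  rw [hcomm, if_congr hadj rfl rfl] at h2
  have h3 : ∑ x ∈ nbr G u ∩ nbr G v, ((if G.Adj u v then 1 else 0) : ℤ)
      = (codeg G u v : ℤ) * (if G.Adj u v then 1 else 0) := by
    rw [Finset.sum_const, codeg, nsmul_eq_mul]
  simp only [sub_eq_add_neg, Finset.sum_add_distrib, Finset.sum_neg_distrib]
  rw [h3]
  rw [← Nat.cast_sum, ← Nat.cast_sum, h1, h2]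
  push_cast
  ring
end

section
/- Let G be a finite simple graph and let u, v, w be pairwise distinct vertices of G. Then the sum, over all triangles T of G, of the quantity Y_{u,v,w}(G) − Y_{u,v,w}(G − T) equals Σ_{x ∈ N_{u,v,w}} ( Y_{u,x} + Y_{v,x} + Y_{w,x} − 1_{uv ∈ E(G)} − 1_{uw ∈ E(G)} − 1_{vw ∈ E(G)} ), where 1_{ab ∈ E(G)} is 1 if ab is an edge of G and 0 otherwise. -/
open Finset
open scoped Classical

variable {V : Type*} [Fintype V] [DecidableEq V]

/-- Triangles containing both endpoints of an edge `ab` are counted by the co-degree. -/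
lemma aux_tri_pair_count (G : SimpleGraph V) {a b : V} (hab : G.Adj a b) :
    ((G.cliqueFinset 3).filter fun t => a ∈ t ∧ b ∈ t).card = codeg G a b := by
  unfold codeg
  refine (Finset.card_bij (fun y _ => ({a, b, y} : Finset V)) ?_ ?_ ?_).symm
  · intro y hy
    simp only [mem_inter, nbr, mem_filter, mem_univ, true_and] at hy
    simp only [mem_filter, SimpleGraph.mem_cliqueFinset_iff, mem_insert, mem_singleton]
    refine ⟨SimpleGraph.is3Clique_triple_iff.mpr ⟨hab, hy.1, hy.2⟩, ?_, ?_⟩ <;> tauto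
  · intro y1 h1 y2 h2 heq
    simp only [mem_inter, nbr, mem_filter, mem_univ, true_and] at h1 h2
    have heq' : ({a, b, y1} : Finset V) = {a, b, y2} := heq
    have hy1 : y1 ∈ ({a, b, y2} : Finset V) := heq' ▸ (by simp)
    simp only [mem_insert, mem_singleton] at hy1
    rcases hy1 with h | h | h
    · exact absurd h.symm h1.1.ne
    · exact absurd h.symm h1.2.ne
    · exact h
  · intro t ht
    simp only [mem_filter, SimpleGraph.mem_cliqueFinset_iff] at ht
    obtain ⟨htc, hat, hbt⟩ := ht
    have hsub : ({a, b} : Finset V) ⊆ t := by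
      intro z hz; simp only [mem_insert, mem_singleton] at hz
      rcases hz with rfl | rfl <;> assumption
    have hcard : (t \ ({a, b} : Finset V)).card = 1 := by
      rw [card_sdiff_of_subset hsub, htc.2, card_pair hab.ne]
    obtain ⟨y, hy⟩ := Finset.card_eq_one.mp hcard
    have hyt : y ∈ t \ ({a, b} : Finset V) := hy ▸ mem_singleton_self y
    rw [mem_sdiff, mem_insert, mem_singleton] at hyt
    push_neg at hyt
    have hay : G.Adj a y := htc.1 (mem_coe.mpr hat) (mem_coe.mpr hyt.1) (Ne.symm hyt.2.1)
    have hby : G.Adj b y := htc.1 (mem_coe.mpr hbt) (mem_coe.mpr hyt.1) (Ne.symm hyt.2.2)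
    refine ⟨y, ?_, ?_⟩
    · simp [nbr, hay, hby]
    · refine Finset.eq_of_subset_of_card_le ?_ ?_
      · intro z hz; simp only [mem_insert, mem_singleton] at hz
        rcases hz with rfl | rfl | rfl <;> first | assumption | exact hyt.1
      · show t.card ≤ ({a, b, y} : Finset V).card
        rw [htc.2]
        have : ({a, b, y} : Finset V).card = 3 :=
          Finset.card_eq_three.mpr ⟨a, b, y, hab.ne, Ne.symm hyt.2.1, Ne.symm hyt.2.2, rfl⟩
        omega

/-- Triangles containing three fixed distinct vertices of a common neighbor `x`:
there is at most one, namely `{a, b, x}`, existing iff `ab` is an edge. -/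
lemma aux_tri_two_count (G : SimpleGraph V) {a b x : V} (hax : G.Adj a x) (hbx : G.Adj b x)
    (hab : a ≠ b) :
    ((G.cliqueFinset 3).filter fun t => (a ∈ t ∧ x ∈ t) ∧ (b ∈ t ∧ x ∈ t)).card
      = if G.Adj a b then 1 else 0 := by
  split_ifs with h
  · rw [Finset.card_eq_one]
    refine ⟨{a, b, x}, ?_⟩
    ext t
    simp only [mem_filter, SimpleGraph.mem_cliqueFinset_iff, mem_singleton]
    constructor
    · rintro ⟨htc, ⟨hat, hxt⟩, hbt, -⟩
      refine (Finset.eq_of_subset_of_card_le ?_ ?_).symm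
      · intro z hz; simp only [mem_insert, mem_singleton] at hz
        rcases hz with rfl | rfl | rfl <;> assumption
      · rw [htc.2]
        have : ({a, b, x} : Finset V).card = 3 :=
          Finset.card_eq_three.mpr ⟨a, b, x, hab, hax.ne, hbx.ne, rfl⟩
        omega
    · rintro rfl
      refine ⟨SimpleGraph.is3Clique_triple_iff.mpr ⟨h, hax, hbx⟩, ?_⟩
      simp
  · rw [Finset.card_eq_zero, Finset.filter_eq_empty_iff]
    rintro t ht ⟨⟨hat, -⟩, hbt, -⟩
    rw [SimpleGraph.mem_cliqueFinset_iff] at ht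
    exact h (ht.1 (mem_coe.mpr hat) (mem_coe.mpr hbt) hab)

/-- No triangle contains four distinct vertices. -/
lemma aux_tri_triple_empty (G : SimpleGraph V) {u v w x : V} (hux : G.Adj u x) (hvx : G.Adj v x)
    (hwx : G.Adj w x) (huv : u ≠ v) (huw : u ≠ w) (hvw : v ≠ w) :
    ((G.cliqueFinset 3).filter fun t =>
      ((u ∈ t ∧ x ∈ t) ∧ (v ∈ t ∧ x ∈ t)) ∧ (w ∈ t ∧ x ∈ t)) = ∅ := by
  rw [Finset.filter_eq_empty_iff]
  rintro t ht ⟨⟨⟨hut, hxt⟩, hvt, -⟩, hwt, -⟩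
  rw [SimpleGraph.mem_cliqueFinset_iff] at ht
  have hsub : ({u, v, w, x} : Finset V) ⊆ t := by
    intro z hz; simp only [mem_insert, mem_singleton] at hz
    rcases hz with rfl | rfl | rfl | rfl <;> assumption
  have h4 : ({u, v, w, x} : Finset V).card = 4 := by
    rw [card_insert_of_notMem (by simp [huv, huw, hux.ne]),
        card_insert_of_notMem (by simp [hvw, hvx.ne]),
        card_insert_of_notMem (by simp [hwx.ne]), card_singleton]
  have := Finset.card_le_card hsub
  rw [ht.2] at this
  omega

/-- Inclusion–exclusion for three finsets, in additive form. -/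
lemma aux_card_union3 (A B C : Finset V) :
    (A ∪ B ∪ C).card + (A ∩ B).card + (A ∩ C).card + (B ∩ C).card
      = A.card + B.card + C.card + (A ∩ B ∩ C).card := by
  have h1 := Finset.card_union_add_card_inter A B
  have h2 := Finset.card_union_add_card_inter (A ∪ B) C
  have h3 := Finset.card_union_add_card_inter (A ∩ C) (B ∩ C)
  rw [union_inter_distrib_right] at h2
  have h5 : (A ∩ C) ∩ (B ∩ C) = A ∩ B ∩ C := by
    ext z; simp only [mem_inter]; tauto
  rw [h5] at h3
  omega

/-- for pairwise distinct `u, v, w`, the total decrease of `Y_{u,v,w}` over all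
single-triangle removals equals
`Σ_{x ∈ N_{u,v,w}} (Y_{u,x} + Y_{v,x} + Y_{w,x} − 1_{uv∈E} − 1_{uw∈E} − 1_{vw∈E})`. -/
theorem codeg3_one_step_change (G : SimpleGraph V) (u v w : V)
    (huv : u ≠ v) (huw : u ≠ w) (hvw : v ≠ w) :
    (∑ t ∈ G.cliqueFinset 3, ((codeg3 G u v w : ℤ) - codeg3 (removeTri G t) u v w)) =
      ∑ x ∈ nbr G u ∩ nbr G v ∩ nbr G w,
        ((codeg G u x : ℤ) + codeg G v x + codeg G w x
          - (if G.Adj u v then 1 else 0) - (if G.Adj u w then 1 else 0)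
          - (if G.Adj v w then 1 else 0)) := by
  set A := nbr G u ∩ nbr G v ∩ nbr G w with hA
  have hadj : ∀ x ∈ A, G.Adj u x ∧ G.Adj v x ∧ G.Adj w x := by
    intro x hx
    simp only [hA, mem_inter, nbr, mem_filter, mem_univ, true_and] at hx
    exact ⟨hx.1.1, hx.1.2, hx.2⟩
  have step1 : ∀ t : Finset V,
      (codeg3 G u v w : ℤ) - codeg3 (removeTri G t) u v w
        = ∑ x ∈ A, (if (u ∈ t ∧ x ∈ t) ∨ (v ∈ t ∧ x ∈ t) ∨ (w ∈ t ∧ x ∈ t)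
            then (1 : ℤ) else 0) := by
    intro t
    have hrm : codeg3 (removeTri G t) u v w
        = (A.filter fun x =>
            ¬ ((u ∈ t ∧ x ∈ t) ∨ (v ∈ t ∧ x ∈ t) ∨ (w ∈ t ∧ x ∈ t))).card := by
      unfold codeg3
      congr 1
      ext x
      simp only [hA, mem_inter, mem_filter, nbr, mem_univ, true_and, removeTri,
        SimpleGraph.deleteEdges_adj, Set.mem_setOf_eq, Finset.mem_coe,
        Finset.mk_mem_sym2_iff]
      tauto
    have hG : codeg3 G u v w = A.card := rfl
    have hsplit := Finset.card_filter_add_card_filter_not (s := A)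
      (p := fun x => (u ∈ t ∧ x ∈ t) ∨ (v ∈ t ∧ x ∈ t) ∨ (w ∈ t ∧ x ∈ t))
    rw [Finset.sum_boole, hrm, hG]
    omega
  calc (∑ t ∈ G.cliqueFinset 3, ((codeg3 G u v w : ℤ) - codeg3 (removeTri G t) u v w))
      = ∑ t ∈ G.cliqueFinset 3, ∑ x ∈ A,
          (if (u ∈ t ∧ x ∈ t) ∨ (v ∈ t ∧ x ∈ t) ∨ (w ∈ t ∧ x ∈ t) then (1 : ℤ) else 0) :=
        Finset.sum_congr rfl fun t _ => step1 t
    _ = ∑ x ∈ A, ∑ t ∈ G.cliqueFinset 3,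
          (if (u ∈ t ∧ x ∈ t) ∨ (v ∈ t ∧ x ∈ t) ∨ (w ∈ t ∧ x ∈ t) then (1 : ℤ) else 0) :=
        Finset.sum_comm
    _ = ∑ x ∈ A, ((((G.cliqueFinset 3).filter fun t =>
          (u ∈ t ∧ x ∈ t) ∨ (v ∈ t ∧ x ∈ t) ∨ (w ∈ t ∧ x ∈ t)).card : ℤ)) :=
        Finset.sum_congr rfl fun x _ => Finset.sum_boole _ _
    _ = _ := by
        refine Finset.sum_congr rfl fun x hx => ?_
        obtain ⟨hux, hvx, hwx⟩ := hadj x hx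
        have hAu := aux_tri_pair_count G hux
        have hAv := aux_tri_pair_count G hvx
        have hAw := aux_tri_pair_count G hwx
        have h2uv := aux_tri_two_count G hux hvx huv
        have h2uw := aux_tri_two_count G hux hwx huw
        have h2vw := aux_tri_two_count G hvx hwx hvw
        have h3 := aux_tri_triple_empty G hux hvx hwx huv huw hvw
        have hU : ((G.cliqueFinset 3).filter fun t =>
              (u ∈ t ∧ x ∈ t) ∨ (v ∈ t ∧ x ∈ t) ∨ (w ∈ t ∧ x ∈ t))
            = ((G.cliqueFinset 3).filter fun t => u ∈ t ∧ x ∈ t)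
              ∪ ((G.cliqueFinset 3).filter fun t => v ∈ t ∧ x ∈ t)
              ∪ ((G.cliqueFinset 3).filter fun t => w ∈ t ∧ x ∈ t) := by
          rw [Finset.filter_or, Finset.filter_or, Finset.union_assoc]
        have key := aux_card_union3
          ((G.cliqueFinset 3).filter fun t => u ∈ t ∧ x ∈ t)
          ((G.cliqueFinset 3).filter fun t => v ∈ t ∧ x ∈ t)
          ((G.cliqueFinset 3).filter fun t => w ∈ t ∧ x ∈ t)
        rw [← Finset.filter_and, ← Finset.filter_and, ← Finset.filter_and,
          ← Finset.filter_and, ← hU, h3, hAu, hAv, hAw, h2uv, h2uw, h2vw,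
          Finset.card_empty] at key
        split_ifs at key ⊢ <;> omega
end
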